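/- Let K be a field, n ≥ 2 and r ≥ 1 integers, and set s = r + (n−1). Let P be the s×r matrix over L_n whose top-left (r−1)×(r−1) block is the identity, whose bottom-right n×1 block is the column (x_1,…,x_n)ᵗ, and whose other entries are 0; let Q be the r×s matrix whose top-left (r−1)×(r−1) block is the identity, whose bottom-right 1×n block is the row (y_1,…,y_n), and whose other entries are 0. Then the map φ: M_r(L_n) → M_s(L_n), φ(A) = P·A·Q, is a K-algebra isomorphism. -/

import Mathlib

open scoped BigOperators

/-- Defining relations of the Leavitt algebra `L_K(1,n)`. -/
inductive LeavittRel (K : Type) [Field K] (n : ℕ) :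
    FreeAlgebra K (Fin n ⊕ Fin n) → FreeAlgebra K (Fin n ⊕ Fin n) → Prop
  | xy (i j : Fin n) :
      LeavittRel K n (FreeAlgebra.ι K (Sum.inl i) * FreeAlgebra.ι K (Sum.inr j))
        (if i = j then 1 else 0)
  | yx :
      LeavittRel K n (∑ j : Fin n, FreeAlgebra.ι K (Sum.inr j) * FreeAlgebra.ι K (Sum.inl j)) 1

/-- The Leavitt algebra `L_n = L_K(1,n)`. -/
abbrev Leavitt (K : Type) [Field K] (n : ℕ) := RingQuot (LeavittRel K n)

/-- The generator `x_i` of the Leavitt algebra. -/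
noncomputable def lx (K : Type) [Field K] (n : ℕ) (i : Fin n) : Leavitt K n :=
  RingQuot.mkAlgHom K (LeavittRel K n) (FreeAlgebra.ι K (Sum.inl i))

/-- The generator `y_i` of the Leavitt algebra. -/
noncomputable def ly (K : Type) [Field K] (n : ℕ) (i : Fin n) : Leavitt K n :=
  RingQuot.mkAlgHom K (LeavittRel K n) (FreeAlgebra.ι K (Sum.inr i))

/-- `x_I = x_{i_k} ⋯ x_{i_1}` for a word `I = (i_1, …, i_k)`. -/
noncomputable def xW (K : Type) [Field K] (n : ℕ) (I : List (Fin n)) : Leavitt K n :=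
  (I.reverse.map (lx K n)).prod

/-- `y_I = y_{i_1} ⋯ y_{i_k}` for a word `I = (i_1, …, i_k)`. -/
noncomputable def yW (K : Type) [Field K] (n : ℕ) (I : List (Fin n)) : Leavitt K n :=
  (I.map (ly K n)).prod

/-- Auxiliary anti-homomorphism used to construct the involution on `L_n`. -/
noncomputable def leavittStarAux (K : Type) [Field K] (n : ℕ) :
    FreeAlgebra K (Fin n ⊕ Fin n) →ₐ[K] (Leavitt K n)ᵐᵒᵖ :=
  FreeAlgebra.lift K fun s =>
    MulOpposite.op (RingQuot.mkAlgHom K (LeavittRel K n) (FreeAlgebra.ι K s.swap))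

theorem leavittStarAux_rel (K : Type) [Field K] (n : ℕ) :
    ∀ ⦃a b : FreeAlgebra K (Fin n ⊕ Fin n)⦄, LeavittRel K n a b →
      leavittStarAux K n a = leavittStarAux K n b := by
  intro a b h
  induction h with
  | xy i j =>
    have h1 : (RingQuot.mkAlgHom K (LeavittRel K n))
        (FreeAlgebra.ι K (Sum.inl j) * FreeAlgebra.ι K (Sum.inr i)) =
        (RingQuot.mkAlgHom K (LeavittRel K n)) (if j = i then 1 else 0) :=
      RingQuot.mkAlgHom_rel K (LeavittRel.xy j i)
    simp only [leavittStarAux, map_mul, FreeAlgebra.lift_ι_apply, Sum.swap_inl, Sum.swap_inr]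
    rw [← MulOpposite.op_mul, ← map_mul, h1]
    by_cases hij : i = j
    · subst hij; simp
    · simp [hij, Ne.symm hij]
  | yx =>
    have h1 : (RingQuot.mkAlgHom K (LeavittRel K n))
        (∑ j : Fin n, FreeAlgebra.ι K (Sum.inr j) * FreeAlgebra.ι K (Sum.inl j)) =
        (RingQuot.mkAlgHom K (LeavittRel K n)) 1 :=
      RingQuot.mkAlgHom_rel K LeavittRel.yx
    simp only [leavittStarAux, map_sum, map_mul, FreeAlgebra.lift_ι_apply, Sum.swap_inl,
      Sum.swap_inr, map_one]
    have key : ∀ x : Fin n,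
        MulOpposite.op ((RingQuot.mkAlgHom K (LeavittRel K n)) (FreeAlgebra.ι K (Sum.inl x))) *
          MulOpposite.op ((RingQuot.mkAlgHom K (LeavittRel K n)) (FreeAlgebra.ι K (Sum.inr x))) =
        MulOpposite.opAddEquiv ((RingQuot.mkAlgHom K (LeavittRel K n))
          (FreeAlgebra.ι K (Sum.inr x) * FreeAlgebra.ι K (Sum.inl x))) := by
      intro x; rw [map_mul]; rfl
    rw [Finset.sum_congr rfl fun x _ => key x, ← map_sum, ← map_sum, h1, map_one]
    rfl

/-- The involution `*` on the Leavitt algebra, as an algebra map into the opposite algebra. -/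
noncomputable def lstarHom (K : Type) [Field K] (n : ℕ) :
    Leavitt K n →ₐ[K] (Leavitt K n)ᵐᵒᵖ :=
  RingQuot.liftAlgHom K ⟨leavittStarAux K n, leavittStarAux_rel K n⟩

/-- The involution `*` on the Leavitt algebra: the unique `K`-linear ring anti-automorphism
with `x_i* = y_i` and `y_i* = x_i`. -/
noncomputable def lstar (K : Type) [Field K] (n : ℕ) (a : Leavitt K n) : Leavitt K n :=
  (lstarHom K n a).unop

/-- An element of `L_n` which is a finite (possibly empty) sum of monomials `y_I x_J`. -/
def IsSumYX (K : Type) [Field K] (n : ℕ) (a : Leavitt K n) : Prop :=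
  ∃ (m : ℕ) (I J : Fin m → List (Fin n)), a = ∑ i, yW K n (I i) * xW K n (J i)

/-- The induced involution on matrices over `L_n`: `(A*)_{ij} = (A_{ji})*`. -/
noncomputable def mstar (K : Type) [Field K] (n r : ℕ)
    (A : Matrix (Fin r) (Fin r) (Leavitt K n)) : Matrix (Fin r) (Fin r) (Leavitt K n) :=
  fun i j => lstar K n (A j i)

/-- The set `P_{n,r}` of unitary matrices over `L_n` all of whose entries are finite sums of
monomials `y_I x_J`. -/
def PsetM (K : Type) [Field K] (n r : ℕ) : Set (Matrix (Fin r) (Fin r) (Leavitt K n)) :=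
  {A | (A * mstar K n r A = 1 ∧ mstar K n r A * A = 1) ∧ ∀ i j, IsSumYX K n (A i j)}

/-- `B` is a complete prefix code: a finite nonempty set of pairwise incomparable words such
that every word is comparable with some element of `B`. -/
def IsCPC (n : ℕ) (B : Set (List (Fin n))) : Prop :=
  B.Finite ∧ B.Nonempty ∧ (∀ u ∈ B, ∀ v ∈ B, u ≠ v → ¬ u <+: v) ∧
    (∀ w : List (Fin n), ∃ u ∈ B, u <+: w ∨ w <+: u)
/-- `x_{k+1}` indexed by a natural number `k` (junk value `0` out of range). -/
noncomputable def lxN (K : Type) [Field K] (n : ℕ) (k : ℕ) : Leavitt K n :=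
  if h : k < n then lx K n ⟨k, h⟩ else 0

/-- `y_{k+1}` indexed by a natural number `k` (junk value `0` out of range). -/
noncomputable def lyN (K : Type) [Field K] (n : ℕ) (k : ℕ) : Leavitt K n :=
  if h : k < n then ly K n ⟨k, h⟩ else 0

/-! After reordering indices, `P` and `Q` are block diagonal: `P = diag(1, x)` and
`Q = diag(1, y)` with `x` the column `(x_i)` and `y` the row `(y_j)`. The defining relations of
`L_n` say exactly that `x y = 1` (as `n × n` matrices) and `y x = 1`, so `P Q = 1` and `Q P = 1`,
and conjugation `A ↦ P A Q` by mutually inverse matrices is an algebra isomorphism with inverse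
`B ↦ Q B P`. -/

open Matrix

section LeavittRelations

variable {K : Type} [Field K] {n : ℕ}

theorem lx_mul_ly (i j : Fin n) : lx K n i * ly K n j = if i = j then 1 else 0 := by
  have h := RingQuot.mkAlgHom_rel K (LeavittRel.xy (K := K) i j)
  rw [map_mul] at h
  rw [lx, ly, h]
  split_ifs <;> simp

theorem sum_ly_mul_lx : ∑ j : Fin n, ly K n j * lx K n j = 1 := by
  have h := RingQuot.mkAlgHom_rel K (LeavittRel.yx (K := K) (n := n))
  simpa only [ly, lx, map_sum, map_mul, map_one] using h

theorem lxN_val (m : Fin n) : lxN K n m = lx K n m := by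
  simp [lxN]

theorem lyN_val (m : Fin n) : lyN K n m = ly K n m := by
  simp [lyN]

theorem replicateCol_lx_mul_replicateRow_ly :
    replicateCol (Fin 1) (lx K n) * replicateRow (Fin 1) (ly K n) = 1 := by
  ext i j
  simp [mul_apply, one_apply, lx_mul_ly]

theorem replicateRow_ly_mul_replicateCol_lx :
    replicateRow (Fin 1) (ly K n) * replicateCol (Fin 1) (lx K n) = 1 := by
  ext i j
  rw [Subsingleton.elim i j]
  simp [replicateRow_mul_replicateCol_apply, dotProduct, sum_ly_mul_lx]

end LeavittRelations

namespace Matrix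

def conjAlgEquiv {R α m n : Type*} [CommSemiring R] [Semiring α] [Algebra R α]
    [Fintype m] [Fintype n] [DecidableEq m] [DecidableEq n] (P : Matrix n m α) (Q : Matrix m n α) (hPQ : P * Q = 1) (hQP : Q * P = 1) :
    Matrix m m α ≃ₐ[R] Matrix n n α where
  toFun A := P * A * Q
  invFun B := Q * B * P
  left_inv A := by
    simp only [← Matrix.mul_assoc, hQP, Matrix.one_mul]
    rw [Matrix.mul_assoc, hQP, Matrix.mul_one]
  right_inv B := by
    simp only [← Matrix.mul_assoc, hPQ, Matrix.one_mul]
    rw [Matrix.mul_assoc, hPQ, Matrix.mul_one]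
  map_mul' A B := by
    simp only [Matrix.mul_assoc]
    rw [← Matrix.mul_assoc Q P, hQP, Matrix.one_mul]
  map_add' A B := by
    simp only [Matrix.mul_add, Matrix.add_mul]
  commutes' c := by
    simp only [Algebra.algebraMap_eq_smul_one, Matrix.mul_smul, Matrix.smul_mul, Matrix.mul_one,
      hPQ]

theorem submatrix_finSumFinEquiv_eq_fromBlocks {α : Type*} [Semiring α] {a n s r : ℕ}
    (hs : a + n = s) (hr : a + 1 = r) (v : ℕ → α) (M : Matrix (Fin s) (Fin r) α)
    (hM : ∀ i j, M i j = if (i : ℕ) < a then (if (i : ℕ) = j then 1 else 0)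
      else if (j : ℕ) = a then v (i - a) else 0) :
    M.submatrix (finSumFinEquiv.trans (finCongr hs)) (finSumFinEquiv.trans (finCongr hr)) =
      fromBlocks 1 0 0 (replicateCol (Fin 1) fun m : Fin n => v m) := by
  ext (i | i) (j | j) <;> simp [hM, one_apply, Fin.ext_iff] <;> omega

theorem mul_eq_one_of_submatrix_eq_fromBlocks {l m n p q α : Type*} [Fintype l] [Fintype n]
    [Fintype q] [DecidableEq l] [DecidableEq m] [DecidableEq p] [Semiring α]
    {P : Matrix m n α} {Q : Matrix n m α} {C : Matrix p q α} {D : Matrix q p α}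
    (e : l ⊕ p ≃ m) (f : l ⊕ q ≃ n)
    (hP : P.submatrix e f = fromBlocks 1 0 0 C) (hQ : Q.submatrix f e = fromBlocks 1 0 0 D)
    (hCD : C * D = 1) : P * Q = 1 := by
  have h : (P * Q).submatrix e e = 1 := by
    rw [← submatrix_mul_equiv P Q e f e, hP, hQ, fromBlocks_multiply]
    simp [hCD]
  simpa using congrArg (fun M : Matrix (l ⊕ p) (l ⊕ p) α => M.submatrix e.symm e.symm) h

end Matrix

/-- Let `s = r + (n-1)`, let `P` be the `s × r` matrix whose top-left `(r-1) × (r-1)` block is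
the identity, whose bottom-right `n × 1` block is the column `(x_1, …, x_n)ᵗ` and whose other
entries are `0`, and let `Q` be the `r × s` matrix whose top-left `(r-1) × (r-1)` block is the
identity, whose bottom-right `1 × n` block is the row `(y_1, …, y_n)` and whose other entries
are `0`. Then `A ↦ P · A · Q` is a `K`-algebra isomorphism `M_r(L_n) → M_s(L_n)`. -/
theorem leavitt_matrix_iso_explicit (K : Type) [Field K] (n : ℕ) (hn : 2 ≤ n)
    (r : ℕ) (hr : 1 ≤ r)
    (P : Matrix (Fin (r + (n - 1))) (Fin r) (Leavitt K n))
    (Q : Matrix (Fin r) (Fin (r + (n - 1))) (Leavitt K n))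
    (hP : ∀ i j, P i j =
      if (i : ℕ) < r - 1 then (if (i : ℕ) = (j : ℕ) then 1 else 0)
      else if (j : ℕ) = r - 1 then lxN K n ((i : ℕ) - (r - 1)) else 0)
    (hQ : ∀ i j, Q i j =
      if (j : ℕ) < r - 1 then (if (i : ℕ) = (j : ℕ) then 1 else 0)
      else if (i : ℕ) = r - 1 then lyN K n ((j : ℕ) - (r - 1)) else 0) :
    ∃ e : Matrix (Fin r) (Fin r) (Leavitt K n) ≃ₐ[K]
        Matrix (Fin (r + (n - 1))) (Fin (r + (n - 1))) (Leavitt K n),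
      ∀ A, e A = P * A * Q := by
  have hs : r - 1 + n = r + (n - 1) := by omega
  have hr' : r - 1 + 1 = r := by omega
  have hP_blocks := submatrix_finSumFinEquiv_eq_fromBlocks hs hr' (lxN K n) P hP
  -- `Qᵀ` has the shape of `P`, with `y` in place of `x`.
  have hQ_blocks := congrArg transpose <|
    submatrix_finSumFinEquiv_eq_fromBlocks hs hr' (lyN K n) Qᵀ fun i j => by
      simp only [transpose_apply, hQ, eq_comm]
  simp only [lxN_val] at hP_blocks
  simp only [lyN_val, transpose_submatrix, transpose_transpose, fromBlocks_transpose,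
    transpose_one, transpose_zero, transpose_replicateCol] at hQ_blocks
  have hPQ := mul_eq_one_of_submatrix_eq_fromBlocks _ _ hP_blocks hQ_blocks
    replicateCol_lx_mul_replicateRow_ly
  have hQP := mul_eq_one_of_submatrix_eq_fromBlocks _ _ hQ_blocks hP_blocks
    replicateRow_ly_mul_replicateCol_lx
  exact ⟨conjAlgEquiv P Q hPQ hQP, fun _ => rfl⟩
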